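/- arXiv:1402.4028 — 2 statements merged into one kernel-verified Lean document; each statement's English description precedes it below -/
import Mathlib

section
/- Suppose char F = 0 or char F = p > d, and |F| ≥ 2d−1. Then any 2d−1 distinct tangent lines ℓ_{t₁},…,ℓ_{t_{2d−1}} of the moment curve in PG(d,F) constitute a generator set with respect to hyperplanes. -/
/-
Identify a linear functional `φ` on `F^{d+1}` with the polynomial `P_φ(t) = φ(a(t))` of degree
at most `d`; then `P_φ'(t) = φ(ȧ(t))`. If the intersections of the hyperplane with the tangent
lines spanned a proper subspace, two independent functionals `f`, `g` would vanish on all of them.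
Each tangent line meets the hyperplane in a nonzero vector `m a(tₖ) + n ȧ(tₖ)`, so the Wronskian
`P_f P_g' - P_f' P_g` vanishes at all `2d - 1` parameters `tₖ`. Its degree is at most `2d - 2`,
so it is identically zero, and in characteristic `0` or `p > d` this forces `P_f`, `P_g`, hence
`f`, `g`, to be linearly dependent.
-/

open Polynomial

/-- The tangent line of the moment curve `t ↦ (1, t, …, t^d)` at parameter `t`, i.e. the
line spanned by `a(t) = (1, t, …, t^d)` and `ȧ(t) = (0, 1, 2t, …, d t^{d-1})`. -/
def momentTangent (F : Type*) [Field F] (d : ℕ) (t : F) :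
    Submodule F (Fin (d + 1) → F) :=
  Submodule.span F
    {fun i : Fin (d + 1) => t ^ (i : ℕ), fun i : Fin (d + 1) => ((i : ℕ) : F) * t ^ ((i : ℕ) - 1)}

namespace Polynomial

variable {R : Type*}

theorem natCast_natDegree_eq_zero_of_derivative_eq_zero [Semiring R] [NoZeroDivisors R]
    {p : R[X]} (h : derivative p = 0) : (p.natDegree : R) = 0 := by
  obtain hn | hn := Nat.eq_zero_or_pos p.natDegree
  · simp [hn]
  have hp : p ≠ 0 := by rintro rfl; simp at hn
  have htop := coeff_derivative p (p.natDegree - 1)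
  rw [h, coeff_zero, Nat.sub_add_cancel hn, ← leadingCoeff, eq_comm,
    show ((p.natDegree - 1 : ℕ) : R) + 1 = p.natDegree by
      rw [← Nat.cast_add_one, Nat.sub_add_cancel hn]] at htop
  exact (mul_eq_zero.mp htop).resolve_left (leadingCoeff_ne_zero.mpr hp)

theorem eq_C_of_derivative_eq_zero_of_natDegree_le [Semiring R] [NoZeroDivisors R] {d : ℕ}
    (hd : (d.factorial : R) ≠ 0) {p : R[X]} (hp : p.natDegree ≤ d) (h : derivative p = 0) :
    p = C (p.coeff 0) := by
  refine eq_C_of_natDegree_eq_zero (Nat.eq_zero_of_not_pos fun hpos => hd ?_)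
  obtain ⟨k, hk⟩ := Nat.dvd_factorial hpos hp
  rw [hk, Nat.cast_mul, natCast_natDegree_eq_zero_of_derivative_eq_zero h, zero_mul]

theorem natDegree_wronskian_le [CommRing R] {P Q : R[X]} {d : ℕ} (hP : P.natDegree ≤ d)
    (hQ : Q.natDegree ≤ d) : (wronskian P Q).natDegree ≤ 2 * d - 2 := by
  have hP' : (derivative P).natDegree ≤ d - 1 := (natDegree_derivative_le P).trans (by omega)
  have hQ' : (derivative Q).natDegree ≤ d - 1 := (natDegree_derivative_le Q).trans (by omega)
  have hle : (wronskian P Q).natDegree ≤ d + (d - 1) :=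
    (natDegree_sub_le_of_le (natDegree_mul_le_of_le hP hQ')
      (natDegree_mul_le_of_le hP' hQ)).trans (by omega)
  obtain rfl | hd := Nat.eq_zero_or_pos d
  · exact hle
  -- both `P Q'` and `P' Q` have `d • P.coeff d * Q.coeff d` as coefficient of `X ^ (2d - 1)`
  have htop : (wronskian P Q).coeff (d + (d - 1)) = 0 := by
    rw [wronskian, coeff_sub, coeff_mul_add_eq_of_natDegree_le hP hQ', add_comm,
      coeff_mul_add_eq_of_natDegree_le hP' hQ, coeff_derivative, coeff_derivative,
      Nat.sub_add_cancel hd]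
    ring
  exact (natDegree_le_pred hle htop).trans (by omega)

theorem not_linearIndependent_of_wronskian_eq_zero {K : Type*} [Field K] {d : ℕ}
    (hd : (d.factorial : K) ≠ 0) {P Q : K[X]} (hP : P.natDegree ≤ d) (hQ : Q.natDegree ≤ d)
    (hW : wronskian P Q = 0) : ¬LinearIndependent K ![P, Q] := by
  classical
  obtain rfl | hQ0 := eq_or_ne Q 0
  · exact fun h => h.ne_zero 1 rfl
  -- write `P = D P₁`, `Q = D Q₁` with `P₁, Q₁` coprime; then `W(P₁, Q₁) = 0` makes them constant
  obtain ⟨P₁, Q₁, hPD, hQD, hunit⟩ := extract_gcd P Q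
  generalize gcd P Q = D at hPD hQD
  subst hPD hQD
  have hD : D ≠ 0 := left_ne_zero_of_mul hQ0
  have hcop : IsCoprime P₁ Q₁ := (gcd_isUnit_iff P₁ Q₁).mp hunit
  have hW₁ : wronskian P₁ Q₁ = 0 := by
    have : D ^ 2 * wronskian P₁ Q₁ = 0 := by
      rw [← hW]; simp only [wronskian, derivative_mul]; ring
    exact (mul_eq_zero.mp this).resolve_left (pow_ne_zero 2 hD)
  have hdeg {A : K[X]} (hA : (D * A).natDegree ≤ d) : A.natDegree ≤ d := by
    obtain rfl | hA0 := eq_or_ne A 0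
    · simp
    exact (natDegree_le_of_dvd (dvd_mul_left A D) (mul_ne_zero hD hA0)).trans hA
  obtain ⟨hP₁', hQ₁'⟩ := hcop.wronskian_eq_zero_iff.mp hW₁
  have hP₁C := eq_C_of_derivative_eq_zero_of_natDegree_le hd (hdeg hP) hP₁'
  have hQ₁C := eq_C_of_derivative_eq_zero_of_natDegree_le hd (hdeg hQ) hQ₁'
  have hb : Q₁.coeff 0 ≠ 0 := fun hb => hQ0 (by rw [hQ₁C, hb, map_zero, mul_zero])
  rw [hP₁C, hQ₁C, LinearIndependent.pair_iff]
  exact fun h => hb (h (Q₁.coeff 0) (-P₁.coeff 0) (by simp only [smul_eq_C_mul, map_neg]; ring)).1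

end Polynomial

theorem LinearMap.pi_apply_eq_sum_single {ι R M : Type*} [Fintype ι] [DecidableEq ι]
    [CommSemiring R] [AddCommMonoid M] [Module R M] (f : (ι → R) →ₗ[R] M) (x : ι → R) :
    f x = ∑ i, x i • f (Pi.single i 1) := by
  conv_lhs => rw [← Finset.univ_sum_single x]
  rw [map_sum]
  refine Finset.sum_congr rfl fun i _ => ?_
  rw [← map_smul, ← Pi.single_smul', smul_eq_mul, mul_one]

theorem Subspace.exists_linearIndependent_pair_mem_dualAnnihilator {K V : Type*} [Field K]
    [AddCommGroup V] [Module K V] [FiniteDimensional K V] {S : Submodule K V}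
    (h : Module.finrank K S + 2 ≤ Module.finrank K V) :
    ∃ f g : Module.Dual K V, f ∈ S.dualAnnihilator ∧ g ∈ S.dualAnnihilator ∧
      LinearIndependent K ![f, g] := by
  have hrank : 2 ≤ Module.finrank K S.dualAnnihilator := by
    have := Subspace.finrank_add_finrank_dualAnnihilator_eq S
    omega
  obtain ⟨b, hb⟩ := exists_linearIndependent_of_le_finrank hrank
  refine ⟨b 0, b 1, (b 0).2, (b 1).2, ?_⟩
  have hval := hb.map_injOn S.dualAnnihilator.subtype Subtype.val_injective.injOn
  rwa [show S.dualAnnihilator.subtype ∘ b = ![(b 0 : Module.Dual K V), b 1] by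
    ext i : 1; fin_cases i <;> rfl] at hval

theorem natCast_factorial_ne_zero_of_char {K : Type*} [Field K] {d : ℕ}
    (hchar : CharP K 0 ∨ ∃ p : ℕ, p.Prime ∧ CharP K p ∧ d < p) : (d.factorial : K) ≠ 0 := by
  rcases hchar with hchar | ⟨p, hp, hchar, hdp⟩
  · rw [Ne, CharP.cast_eq_zero_iff K 0, zero_dvd_iff]
    exact d.factorial_ne_zero
  · rw [Ne, CharP.cast_eq_zero_iff K p, hp.dvd_factorial]
    omega

section MomentCurve

variable {F : Type*} [Field F] {d : ℕ}

noncomputable def momentPoly : Module.Dual F (Fin (d + 1) → F) →ₗ[F] F[X] where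
  toFun φ := ∑ i : Fin (d + 1), monomial i (φ (Pi.single i 1))
  map_add' φ ψ := by simp [Finset.sum_add_distrib]
  map_smul' c φ := by simp [Finset.smul_sum, smul_monomial]

theorem momentPoly_apply (φ : Module.Dual F (Fin (d + 1) → F)) :
    momentPoly φ = ∑ i : Fin (d + 1), monomial i (φ (Pi.single i 1)) := rfl

theorem coeff_momentPoly (φ : Module.Dual F (Fin (d + 1) → F)) (i : Fin (d + 1)) :
    (momentPoly φ).coeff i = φ (Pi.single i 1) := by
  rw [momentPoly_apply, finsetSum_coeff, Finset.sum_eq_single i (fun j _ hj => ?_) (by simp),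
    coeff_monomial_same]
  exact coeff_monomial_of_ne _ (Fin.val_injective.ne hj.symm)

theorem natDegree_momentPoly_le (φ : Module.Dual F (Fin (d + 1) → F)) :
    (momentPoly φ).natDegree ≤ d := by
  rw [momentPoly_apply]
  exact natDegree_sum_le_of_forall_le _ _ fun i _ =>
    (natDegree_monomial_le _).trans (Nat.lt_succ_iff.mp i.2)

theorem ker_momentPoly : LinearMap.ker (momentPoly (F := F) (d := d)) = ⊥ := by
  refine LinearMap.ker_eq_bot'.mpr fun φ hφ => LinearMap.pi_ext fun i x => ?_
  rw [← mul_one x, ← smul_eq_mul, Pi.single_smul', map_smul, ← coeff_momentPoly, hφ]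
  simp

theorem eval_momentPoly (φ : Module.Dual F (Fin (d + 1) → F)) (τ : F) :
    (momentPoly φ).eval τ = φ (fun i => τ ^ (i : ℕ)) := by
  rw [momentPoly_apply, eval_finsetSum, φ.pi_apply_eq_sum_single]
  simp only [eval_monomial, smul_eq_mul, mul_comm]

theorem eval_derivative_momentPoly (φ : Module.Dual F (Fin (d + 1) → F)) (τ : F) :
    (derivative (momentPoly φ)).eval τ = φ (fun i => ((i : ℕ) : F) * τ ^ ((i : ℕ) - 1)) := by
  rw [momentPoly_apply, derivative_sum, eval_finsetSum, φ.pi_apply_eq_sum_single]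
  simp only [derivative_monomial, eval_monomial, smul_eq_mul]
  exact Finset.sum_congr rfl fun i _ => by ring

theorem finrank_momentTangent (hd : 0 < d) (τ : F) :
    Module.finrank F (momentTangent F d τ) = 2 := by
  have hind : LinearIndependent F ![fun i : Fin (d + 1) => τ ^ (i : ℕ),
      fun i : Fin (d + 1) => ((i : ℕ) : F) * τ ^ ((i : ℕ) - 1)] := by
    refine LinearIndependent.pair_iff.mpr fun s u hsu => ?_
    have hs : s = 0 := by simpa using congrFun hsu 0
    exact ⟨hs, by simpa [hs] using congrFun hsu ⟨1, by omega⟩⟩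
  rw [momentTangent, ← Matrix.range_cons_cons_empty, finrank_span_eq_card hind, Fintype.card_fin]

theorem momentTangent_inf_ne_bot (hd : 0 < d) (τ : F) {H : Submodule F (Fin (d + 1) → F)}
    (hH : d ≤ Module.finrank F H) : momentTangent F d τ ⊓ H ≠ ⊥ := by
  intro h
  have := Submodule.finrank_add_finrank_le_of_disjoint (disjoint_iff.mpr h)
  rw [finrank_momentTangent hd, Module.finrank_fin_fun] at this
  omega

theorem eval_wronskian_momentPoly_eq_zero {τ : F} {v : Fin (d + 1) → F}
    (hv : v ∈ momentTangent F d τ) (hv0 : v ≠ 0) {f g : Module.Dual F (Fin (d + 1) → F)}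
    (hf : f v = 0) (hg : g v = 0) : (wronskian (momentPoly f) (momentPoly g)).eval τ = 0 := by
  obtain ⟨m, n, rfl⟩ := Submodule.mem_span_pair.mp hv
  have hmn : m ≠ 0 ∨ n ≠ 0 := by
    by_contra! h
    simp [h] at hv0
  simp only [map_add, map_smul, smul_eq_mul, ← eval_momentPoly, ← eval_derivative_momentPoly]
    at hf hg
  rw [wronskian, eval_sub, eval_mul, eval_mul]
  rcases hmn with hm | hn
  · refine (mul_eq_zero.mp ?_).resolve_left hm
    linear_combination (derivative (momentPoly g)).eval τ * hf -
      (derivative (momentPoly f)).eval τ * hg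
  · refine (mul_eq_zero.mp ?_).resolve_left hn
    linear_combination (momentPoly f).eval τ * hg - (momentPoly g).eval τ * hf

end MomentCurve

theorem moment_tangents_generator_general (F : Type*) [Field F] (d : ℕ)
    (hchar : CharP F 0 ∨ ∃ p : ℕ, p.Prime ∧ CharP F p ∧ d < p)
    (t : Fin (2 * d - 1) → F) (ht : Function.Injective t) :
    ∀ Pl : Submodule F (Fin (d + 1) → F), Module.finrank F Pl = d →
      Submodule.span F
        (⋃ k : Fin (2 * d - 1),
          ((momentTangent F d (t k) : Set (Fin (d + 1) → F)) ∩ (Pl : Set (Fin (d + 1) → F)))) = Pl := by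
  intro Pl hPl
  obtain rfl | hd := Nat.eq_zero_or_pos d
  · simp [Submodule.finrank_eq_zero.mp hPl]
  set S := Submodule.span F (⋃ k, ((momentTangent F d (t k) : Set (Fin (d + 1) → F)) ∩ Pl))
  have hSPl : S ≤ Pl := Submodule.span_le.mpr (Set.iUnion_subset fun _ => Set.inter_subset_right)
  refine Submodule.eq_of_le_of_finrank_le hSPl (not_lt.mp fun hlt => ?_)
  obtain ⟨f, g, hf, hg, hfg⟩ :=
    Subspace.exists_linearIndependent_pair_mem_dualAnnihilator (S := S) (by rw [Module.finrank_fin_fun]; omega)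
  have hW : wronskian (momentPoly f) (momentPoly g) = 0 := by
    refine eq_zero_of_natDegree_lt_card_of_eval_eq_zero _ ht (fun k => ?_) ?_
    · obtain ⟨v, hv, hv0⟩ :=
        (Submodule.ne_bot_iff _).mp (momentTangent_inf_ne_bot hd (t k) hPl.ge)
      have hvS : v ∈ S := Submodule.subset_span (Set.mem_iUnion.mpr ⟨k, hv⟩)
      exact eval_wronskian_momentPoly_eq_zero (Submodule.mem_inf.mp hv).1 hv0
        ((S.mem_dualAnnihilator f).mp hf v hvS) ((S.mem_dualAnnihilator g).mp hg v hvS)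
    · rw [Fintype.card_fin]
      exact (natDegree_wronskian_le (natDegree_momentPoly_le f)
        (natDegree_momentPoly_le g)).trans_lt (by omega)
  have hPQ := hfg.map' momentPoly ker_momentPoly
  rw [show momentPoly ∘ ![f, g] = ![momentPoly f, momentPoly g] by
    ext i : 1; fin_cases i <;> rfl] at hPQ
  exact not_linearIndependent_of_wronskian_eq_zero (natCast_factorial_ne_zero_of_char hchar)
    (natDegree_momentPoly_le f) (natDegree_momentPoly_le g) hW hPQ

/-- If `char F = 0` or `char F = p > d`, and `|F| ≥ 2d - 1`, then any `2d - 1` distinct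
tangent lines of the moment curve form a generator set with respect to hyperplanes:
every hyperplane is spanned by its intersections with these lines. -/
theorem moment_tangents_generator (F : Type*) [Field F] (d : ℕ)
    (hchar : CharP F 0 ∨ ∃ p : ℕ, p.Prime ∧ CharP F p ∧ d < p)
    (hF : ((2 * d - 1 : ℕ) : Cardinal) ≤ Cardinal.mk F)
    (t : Fin (2 * d - 1) → F) (ht : Function.Injective t) :
    ∀ Pl : Submodule F (Fin (d + 1) → F), Module.finrank F Pl = d →
      Submodule.span F
        (⋃ k : Fin (2 * d - 1),
          ((momentTangent F d (t k) : Set (Fin (d + 1) → F)) ∩ (Pl : Set (Fin (d + 1) → F)))) = Pl :=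
  moment_tangents_generator_general F d hchar t ht
end

section
/- If char F = d (prime), then the Plücker system ∑_i (N−2i)H_{i,N−i} = 0 for N = 1,…,2d−1 combined with the Plücker relations has, up to scalar, exactly one nonzero solution: H_{0,d} ≠ 0 and all other H_{ij} = 0. Hence exactly one codimension-two subspace of PG(d,F) meets every tangent line of the moment curve, namely the intersection of the hyperplanes [1,0,…,0] and [0,…,0,1]. -/
open Polynomial

theorem Module.Dual.apply_eq_sum_mul {R ι : Type*} [CommSemiring R] [Fintype ι] [DecidableEq ι]
    (φ : Module.Dual R (ι → R)) (x : ι → R) : φ x = ∑ i, x i * φ (Pi.single i 1) := by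
  conv_lhs => rw [← Finset.univ_sum_single x]
  rw [map_sum]
  refine Finset.sum_congr rfl fun i _ => ?_
  rw [← smul_eq_mul, ← map_smul, ← Pi.single_smul', smul_eq_mul, mul_one]

namespace Polynomial

section CharP

variable {R : Type*} [CommRing R] {p : ℕ} [CharP R p] {Q : R[X]}

theorem coeff_eq_zero_of_derivative_eq_zero [NoZeroDivisors R] (hQ : derivative Q = 0) {n : ℕ}
    (hn : ¬ p ∣ n) : Q.coeff n = 0 := by
  obtain ⟨m, rfl⟩ : ∃ m, n = m + 1 :=
    Nat.exists_eq_succ_of_ne_zero (by rintro rfl; exact hn (dvd_zero p))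
  have hm : ((m + 1 : ℕ) : R) ≠ 0 := (CharP.cast_eq_zero_iff R p _).not.mpr hn
  have h := coeff_derivative Q m
  rw [hQ, coeff_zero] at h
  push_cast at hm
  exact (mul_eq_zero.mp h.symm).resolve_right hm

theorem dvd_natDegree_of_derivative_eq_zero [NoZeroDivisors R] (hQ : derivative Q = 0) :
    p ∣ Q.natDegree := by
  rcases eq_or_ne Q 0 with rfl | hQ0
  · simp
  by_contra hp
  exact leadingCoeff_ne_zero.mpr hQ0 (coeff_eq_zero_of_derivative_eq_zero hQ hp)

theorem natDegree_derivative_le_sub_two (hQ : Q.natDegree ≤ p) :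
    (derivative Q).natDegree ≤ p - 2 := by
  refine natDegree_le_iff_coeff_eq_zero.mpr fun m hm => ?_
  rw [coeff_derivative]
  rcases (show p < m + 1 ∨ m + 1 = p by omega) with h | h
  · rw [coeff_eq_zero_of_natDegree_lt (hQ.trans_lt h), zero_mul]
  · have hp : ((m + 1 : ℕ) : R) = 0 := by rw [h, CharP.cast_eq_zero]
    push_cast at hp
    rw [hp, mul_zero]

theorem natDegree_wronskian_le_s14 (hp : 2 ≤ p) {U W : R[X]} (hU : U.natDegree ≤ p)
    (hW : W.natDegree ≤ p) : (wronskian U W).natDegree ≤ 2 * p - 2 := by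
  have hU' := natDegree_derivative_le_sub_two hU
  have hW' := natDegree_derivative_le_sub_two hW
  refine (natDegree_sub_le _ _).trans (max_le ?_ ?_) <;> refine natDegree_mul_le.trans ?_ <;> omega

end CharP

theorem wronskian_mul_left {R : Type*} [CommRing R] (D U W : R[X]) :
    wronskian (D * U) (D * W) = D ^ 2 * wronskian U W := by
  simp only [wronskian, derivative_mul]
  ring

theorem derivative_eq_zero_of_wronskian_eq_zero {F : Type*} [Field F] {p : ℕ} [CharP F p]
    {U W : F[X]} (hU : U.natDegree ≤ p) (hW : W.natDegree ≤ p)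
    (hUW : LinearIndependent F ![U, W]) (hw : wronskian U W = 0) :
    derivative U = 0 ∧ derivative W = 0 := by
  classical
  obtain ⟨U₁, W₁, hU₁, hW₁, hunit⟩ := extract_gcd U W
  set D := gcd U W
  have hD : D ≠ 0 := fun h => hUW.ne_zero 0 (by simp [hU₁, h])
  have hcop : IsCoprime U₁ W₁ := (gcd_isUnit_iff_isRelPrime.mp hunit).isCoprime
  obtain ⟨hU₁', hW₁'⟩ : derivative U₁ = 0 ∧ derivative W₁ = 0 := by
    rw [← hcop.wronskian_eq_zero_iff]
    rw [hU₁, hW₁, wronskian_mul_left] at hw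
    exact (mul_eq_zero.mp hw).resolve_left (pow_ne_zero 2 hD)
  -- A nonconstant factor with zero derivative has degree divisible by `p`, hence `≥ p`; so if `D`
  -- were not constant, `U₁` and `W₁` would both be constants, making `U` and `W` proportional.
  have hD' : derivative D = 0 := by
    refine derivative_of_natDegree_zero (Nat.eq_zero_of_not_pos fun hpos => ?_)
    have hconst {Q : F[X]} (hQ : derivative Q = 0) (hDQ : (D * Q).natDegree ≤ p) :
        Q = C (Q.coeff 0) := by
      refine eq_C_of_natDegree_eq_zero ?_
      rcases eq_or_ne Q 0 with rfl | hQ0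
      · exact natDegree_zero
      obtain ⟨k, hk⟩ := dvd_natDegree_of_derivative_eq_zero (p := p) hQ
      rw [natDegree_mul hD hQ0] at hDQ
      rcases k with _ | k
      · simpa using hk
      nlinarith
    have h := (LinearIndependent.pair_iff.mp hUW) (W₁.coeff 0) (-U₁.coeff 0) (by
      rw [hU₁, hW₁, hconst hU₁' (hU₁ ▸ hU), hconst hW₁' (hW₁ ▸ hW)]
      simp only [smul_eq_C_mul, coeff_C_zero, C_neg]
      ring)
    refine hUW.ne_zero 0 ?_
    rw [Matrix.cons_val_zero, hU₁, hconst hU₁' (hU₁ ▸ hU), neg_eq_zero.mp h.2, C_0, mul_zero]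
  refine ⟨?_, ?_⟩
  · rw [hU₁, derivative_mul, hD', hU₁', zero_mul, mul_zero, add_zero]
  · rw [hW₁, derivative_mul, hD', hW₁', zero_mul, mul_zero, add_zero]

end Polynomial

theorem exists_linearIndependent_pair_ker_inf_ker_eq {F V : Type*} [Field F] [AddCommGroup V]
    [Module F V] [FiniteDimensional F V] (H : Submodule F V)
    (hH : Module.finrank F H + 2 = Module.finrank F V) :
    ∃ u w : Module.Dual F V, LinearIndependent F ![u, w] ∧
      LinearMap.ker u ⊓ LinearMap.ker w = H := by
  let e : (V ⧸ H) ≃ₗ[F] (Fin 2 → F) := LinearEquiv.ofFinrankEq _ _ (by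
    have := H.finrank_quotient_add_finrank
    simp only [Module.finrank_fin_fun]
    omega)
  let L : V →ₗ[F] Fin 2 → F := e.toLinearMap ∘ₗ H.mkQ
  have hL : Function.Surjective L := e.surjective.comp H.mkQ_surjective
  refine ⟨LinearMap.proj 0 ∘ₗ L, LinearMap.proj 1 ∘ₗ L, ?_, ?_⟩
  · refine LinearIndependent.pair_iff.mpr fun s t hst => ⟨?_, ?_⟩
    · obtain ⟨x, hx⟩ := hL (Pi.single 0 1)
      simpa [hx] using LinearMap.congr_fun hst x
    · obtain ⟨x, hx⟩ := hL (Pi.single 1 1)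
      simpa [hx] using LinearMap.congr_fun hst x
  · ext x
    have hx : x ∈ H ↔ L x = 0 := by
      rw [LinearMap.comp_apply, LinearEquiv.coe_coe, LinearEquiv.map_eq_zero_iff,
        Submodule.mkQ_apply, Submodule.Quotient.mk_eq_zero]
    rw [hx, funext_iff, Fin.forall_fin_two]
    rfl

theorem finrank_ker_proj_inf_ker_proj {F ι : Type*} [Field F] [Fintype ι] [DecidableEq ι]
    {i j : ι} (hij : i ≠ j) :
    Module.finrank F
      (LinearMap.ker (LinearMap.proj i) ⊓ LinearMap.ker (LinearMap.proj j) :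
        Submodule F (ι → F)) =
      Fintype.card ι - 2 := by
  let L := (LinearMap.proj i : (ι → F) →ₗ[F] F).prod (LinearMap.proj j)
  have hL : Function.Surjective L := fun ab =>
    ⟨Pi.single i ab.1 + Pi.single j ab.2, by simp [L, hij, hij.symm]⟩
  have h := L.finrank_range_add_finrank_ker
  rw [LinearMap.range_eq_top.mpr hL, finrank_top, LinearMap.ker_prod] at h
  simp only [Module.finrank_prod, Module.finrank_self, Module.finrank_fintype_fun_eq_card] at h
  omega

section MomentCurve

variable {F : Type*} [Field F] {d : ℕ}

/-- The hyperplane `φ = 0` as the polynomial `∑ φ(eᵢ) Xⁱ`, whose roots are the parameters of the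
moment-curve points on it. -/
noncomputable def dualPoly : Module.Dual F (Fin (d + 1) → F) →ₗ[F] F[X] :=
  ∑ i : Fin (d + 1), (LinearMap.applyₗ (Pi.single i 1)).smulRight (X ^ (i : ℕ))

theorem dualPoly_apply (φ : Module.Dual F (Fin (d + 1) → F)) :
    dualPoly φ = ∑ i : Fin (d + 1), φ (Pi.single i 1) • X ^ (i : ℕ) := by
  simp [dualPoly]

theorem coeff_dualPoly (φ : Module.Dual F (Fin (d + 1) → F)) (i : Fin (d + 1)) :
    (dualPoly φ).coeff i = φ (Pi.single i 1) := by
  simp [dualPoly_apply, coeff_X_pow, Fin.val_inj]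

theorem natDegree_dualPoly_le (φ : Module.Dual F (Fin (d + 1) → F)) :
    (dualPoly φ).natDegree ≤ d := by
  rw [dualPoly_apply]
  refine natDegree_sum_le_of_forall_le _ _ fun i _ => (natDegree_smul_le _ _).trans ?_
  rw [natDegree_X_pow]
  exact Nat.lt_succ_iff.mp i.isLt

theorem dualPoly_injective : Function.Injective (dualPoly (F := F) (d := d)) := by
  refine (injective_iff_map_eq_zero _).mpr fun φ hφ => LinearMap.pi_ext fun i x => ?_
  have h := coeff_dualPoly φ i
  rw [hφ, coeff_zero] at h
  rw [← mul_one x, ← smul_eq_mul, Pi.single_smul', map_smul, ← h, smul_zero,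
    LinearMap.zero_apply]

theorem LinearIndependent.dualPoly_pair {u w : Module.Dual F (Fin (d + 1) → F)}
    (h : LinearIndependent F ![u, w]) : LinearIndependent F ![dualPoly u, dualPoly w] :=
  LinearIndependent.pair_iff.mpr fun s t hst =>
    LinearIndependent.pair_iff.mp h s t (dualPoly_injective (by simpa using hst))

theorem eval_dualPoly (φ : Module.Dual F (Fin (d + 1) → F)) (t : F) :
    (dualPoly φ).eval t = φ (fun i => t ^ (i : ℕ)) := by
  simp [dualPoly_apply, eval_finsetSum, φ.apply_eq_sum_mul (fun i => t ^ (i : ℕ)), mul_comm]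

theorem eval_derivative_dualPoly (φ : Module.Dual F (Fin (d + 1) → F)) (t : F) :
    (derivative (dualPoly φ)).eval t = φ (fun i => ((i : ℕ) : F) * t ^ ((i : ℕ) - 1)) := by
  rw [dualPoly_apply, φ.apply_eq_sum_mul, derivative_sum, eval_finsetSum]
  refine Finset.sum_congr rfl fun i _ => ?_
  simp only [derivative_smul, derivative_X_pow, eval_smul, eval_mul, eval_C, eval_pow,
    eval_X, smul_eq_mul]
  ring

theorem eval_wronskian_dualPoly_eq_zero {u w : Module.Dual F (Fin (d + 1) → F)} {t : F}
    (h : momentTangent F d t ⊓ (LinearMap.ker u ⊓ LinearMap.ker w) ≠ ⊥) :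
    (wronskian (dualPoly u) (dualPoly w)).eval t = 0 := by
  obtain ⟨x, hx, hx0⟩ := (Submodule.ne_bot_iff _).mp h
  simp only [Submodule.mem_inf, LinearMap.mem_ker] at hx
  obtain ⟨⟨a, c, rfl⟩, hu, hw⟩ := And.imp_left Submodule.mem_span_pair.mp hx
  have hdet : !![(dualPoly u).eval t, (derivative (dualPoly u)).eval t;
      (dualPoly w).eval t, (derivative (dualPoly w)).eval t].det = 0 := by
    refine Matrix.exists_mulVec_eq_zero_iff.mp ⟨![a, c], fun hac => hx0 ?_, ?_⟩
    · simp [show a = 0 from congrFun hac 0, show c = 0 from congrFun hac 1]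
    · rw [map_add, map_smul, map_smul, smul_eq_mul, smul_eq_mul] at hu hw
      ext i
      fin_cases i <;>
        simp [Matrix.mulVec, dotProduct, eval_dualPoly, eval_derivative_dualPoly, mul_comm, hu, hw]
  simpa [Matrix.det_fin_two_of, wronskian] using hdet

theorem ker_proj_zero_inf_ker_proj_last_le_ker [CharP F d] {φ : Module.Dual F (Fin (d + 1) → F)}
    (hφ : derivative (dualPoly φ) = 0) :
    (LinearMap.ker (LinearMap.proj 0) ⊓ LinearMap.ker (LinearMap.proj (Fin.last d)) :
      Submodule F (Fin (d + 1) → F)) ≤ LinearMap.ker φ := by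
  intro z hz
  simp only [Submodule.mem_inf, LinearMap.mem_ker, LinearMap.proj_apply] at hz ⊢
  rw [φ.apply_eq_sum_mul]
  refine Finset.sum_eq_zero fun i _ => ?_
  by_cases h0 : i = 0
  · rw [h0, hz.1, zero_mul]
  by_cases hl : i = Fin.last d
  · rw [hl, hz.2, zero_mul]
  have hi : ¬ d ∣ (i : ℕ) := fun h =>
    (Nat.le_of_dvd (Fin.pos_iff_ne_zero.mpr h0) h).not_gt (Fin.val_lt_last hl)
  rw [← coeff_dualPoly, coeff_eq_zero_of_derivative_eq_zero hφ hi, mul_zero]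

/-- In characteristic `d` the velocity vector `(i tⁱ⁻¹)ᵢ` has last coordinate `d tᵈ⁻¹ = 0`. -/
theorem momentTangent_inf_ker_proj_zero_inf_ker_proj_last_ne_bot [CharP F d] (hd : 0 < d)
    (t : F) :
    momentTangent F d t ⊓
      (LinearMap.ker (LinearMap.proj 0) ⊓ LinearMap.ker (LinearMap.proj (Fin.last d))) ≠ ⊥ := by
  refine (Submodule.ne_bot_iff _).mpr ⟨fun i => ((i : ℕ) : F) * t ^ ((i : ℕ) - 1),
    Submodule.mem_inf.mpr ⟨Submodule.subset_span (by simp), ?_⟩, fun h => ?_⟩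
  · simp [CharP.cast_eq_zero]
  · simpa using congrFun h ⟨1, by omega⟩

end MomentCurve

/-- If `char F = d` is prime (and `|F| ≥ 2d - 1`), then exactly one codimension-two
subspace of `PG(d,F)` meets every tangent line of the moment curve, namely the
intersection of the hyperplanes `[1,0,…,0]` and `[0,…,0,1]` (i.e. `z₀ = 0 = z_d`);
its Plücker coordinates are all zero except `H_{0,d}`. -/
theorem unique_transversal_char_d (F : Type*) [Field F] (d : ℕ)
    (hd : d.Prime) (hchar : CharP F d)
    (hF : ((2 * d - 1 : ℕ) : Cardinal) ≤ Cardinal.mk F) :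
    (Module.finrank F
        (LinearMap.ker (LinearMap.proj (0 : Fin (d + 1)) :
            (Fin (d + 1) → F) →ₗ[F] F) ⊓
          LinearMap.ker (LinearMap.proj (Fin.last d) :
            (Fin (d + 1) → F) →ₗ[F] F) : Submodule F (Fin (d + 1) → F)) = d - 1 ∧
      (∀ t : F, momentTangent F d t ⊓
        (LinearMap.ker (LinearMap.proj (0 : Fin (d + 1)) : (Fin (d + 1) → F) →ₗ[F] F) ⊓
          LinearMap.ker (LinearMap.proj (Fin.last d) : (Fin (d + 1) → F) →ₗ[F] F)) ≠ ⊥)) ∧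
    ∀ H : Submodule F (Fin (d + 1) → F),
      Module.finrank F H = d - 1 → (∀ t : F, momentTangent F d t ⊓ H ≠ ⊥) →
        H = LinearMap.ker (LinearMap.proj (0 : Fin (d + 1)) : (Fin (d + 1) → F) →ₗ[F] F) ⊓
            LinearMap.ker (LinearMap.proj (Fin.last d) : (Fin (d + 1) → F) →ₗ[F] F) := by
  have hd2 := hd.two_le
  have hrank : Module.finrank F (LinearMap.ker (LinearMap.proj 0) ⊓
      LinearMap.ker (LinearMap.proj (Fin.last d)) : Submodule F (Fin (d + 1) → F)) = d - 1 := by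
    rw [finrank_ker_proj_inf_ker_proj (by simp [Fin.ext_iff]; omega), Fintype.card_fin]
    omega
  refine ⟨⟨hrank, momentTangent_inf_ker_proj_zero_inf_ker_proj_last_ne_bot hd.pos⟩,
    fun H hH hmeet => ?_⟩
  obtain ⟨u, w, huw, rfl⟩ := exists_linearIndependent_pair_ker_inf_ker_eq H (by simp; omega)
  have hwronskian : wronskian (dualPoly u) (dualPoly w) = 0 := by
    refine eq_zero_of_forall_eval_zero_of_natDegree_lt_card _
      (fun t => eval_wronskian_dualPoly_eq_zero (hmeet t)) (lt_of_lt_of_le ?_ hF)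
    have := natDegree_wronskian_le_s14 hd2 (natDegree_dualPoly_le u) (natDegree_dualPoly_le w)
    exact_mod_cast (by omega : _ < 2 * d - 1)
  obtain ⟨hu, hw⟩ := derivative_eq_zero_of_wronskian_eq_zero (natDegree_dualPoly_le u)
    (natDegree_dualPoly_le w) huw.dualPoly_pair hwronskian
  refine (Submodule.eq_of_le_of_finrank_le ?_ (hH.trans hrank.symm).le).symm
  exact le_inf (ker_proj_zero_inf_ker_proj_last_le_ker hu)
    (ker_proj_zero_inf_ker_proj_last_le_ker hw)
end
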